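/- arXiv:2601.13102 — 4 statements merged into one kernel-verified Lean document; each statement's English description precedes it below -/
import Mathlib

section
/- Let H be a Hilbert space and let R_u, R_w : H → ℝ be functionals of the form R_u(f) = E_u(f) + λ‖f‖² and R_w(f) = E_w(f) + λ‖f‖², where E_u and E_w are convex and each difference E_u - E_w depends on f only through evaluation of f at a single point via a bounded linear functional L with ‖L‖ ≤ κ, and |(E_u - E_w)(f) - (E_u - E_w)(g)| ≤ (2ρ/(n+1))|L(f) - L(g)| for all f, g. If f_u minimizes R_u and f_w minimizes R_w, then ‖f_u - f_w‖ ≤ κρ/(λ(n+1)). -/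
/-!
Adding `λ‖f‖²` to a convex functional makes it `2λ`-strongly convex, and a minimizer `x` of an
`m`-strongly convex function `R` satisfies the quadratic growth bound `R x + m/2 ‖y - x‖² ≤ R y`.
Adding these bounds for the two minimizers, the regularizers cancel and only the
difference `D = E_u - E_w` survives, so
`2λ‖f_u - f_w‖² ≤ D(f_w) - D(f_u) ≤ (2ρ/(n+1)) κ ‖f_u - f_w‖`; dividing by `‖f_u - f_w‖`
gives the claim.
-/

lemma le_div_of_mul_sq_le_mul {a b d : ℝ} (ha : 0 < a) (hb : 0 ≤ b) (h : a * d ^ 2 ≤ b * d) :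
    d ≤ b / a := by
  rcases le_or_gt d 0 with hd | hd
  · exact hd.trans (by positivity)
  · rw [le_div_iff₀ ha]
    nlinarith

section StrongConvexity

open Filter Topology

variable {E : Type*} [NormedAddCommGroup E]

lemma ConvexOn.strongConvexOn_add_mul_sq_norm [InnerProductSpace ℝ E] {s : Set E} {f : E → ℝ}
    (hf : ConvexOn ℝ s f) (lam : ℝ) : StrongConvexOn s (2 * lam) fun x ↦ f x + lam * ‖x‖ ^ 2 := by
  rw [strongConvexOn_iff_convex]
  convert hf using 2
  ring

lemma StrongConvexOn.add_mul_sq_norm_sub_le_of_isMinOn [NormedSpace ℝ E] {s : Set E} {m : ℝ}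
    {f : E → ℝ} {x y : E} (hf : StrongConvexOn s m f) (hx : x ∈ s) (hmin : IsMinOn f s x)
    (hy : y ∈ s) :
    f x + m / 2 * ‖y - x‖ ^ 2 ≤ f y := by
  set c := m / 2 * ‖y - x‖ ^ 2 with hc
  have hsegment : ∀ t : ℝ, 0 < t → t < 1 → f x + (1 - t) * c ≤ f y := by
    intro t ht0 ht1
    have hconv := hf.2 hx hy (by linarith) ht0.le (sub_add_cancel 1 t)
    have hle : f x ≤ f ((1 - t) • x + t • y) :=
      hmin (hf.1 hx hy (by linarith) ht0.le (sub_add_cancel 1 t))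
    simp only [smul_eq_mul, norm_sub_rev x y, ← hc] at hconv
    refine le_of_mul_le_mul_left ?_ ht0
    linarith
  have hlim : Tendsto (fun t : ℝ ↦ f x + (1 - t) * c) (𝓝[>] 0) (𝓝 (f x + c)) :=
    ((by fun_prop : Continuous fun t : ℝ ↦ f x + (1 - t) * c).tendsto' 0 _ (by simp)).mono_left
      nhdsWithin_le_nhds
  refine le_of_tendsto hlim ?_
  filter_upwards [Ioo_mem_nhdsGT zero_lt_one] with t ht using hsegment t ht.1 ht.2

lemma StrongConvexOn.mul_sq_norm_sub_le_of_isMinOn [NormedSpace ℝ E] {s : Set E} {m : ℝ}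
    {f g : E → ℝ} {x y : E} (hf : StrongConvexOn s m f) (hg : StrongConvexOn s m g)
    (hx : x ∈ s) (hy : y ∈ s) (hfx : IsMinOn f s x) (hgy : IsMinOn g s y) :
    m * ‖x - y‖ ^ 2 ≤ (f y - g y) - (f x - g x) := by
  have hf_growth := hf.add_mul_sq_norm_sub_le_of_isMinOn hx hfx hy
  have hg_growth := hg.add_mul_sq_norm_sub_le_of_isMinOn hy hgy hx
  rw [norm_sub_rev] at hf_growth
  linarith

end StrongConvexity

theorem stmt_8_general {H : Type*} [NormedAddCommGroup H] [InnerProductSpace ℝ H]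
    (Eu Ew : H → ℝ) (hEu : ConvexOn ℝ Set.univ Eu) (hEw : ConvexOn ℝ Set.univ Ew)
    (lam κ ρ : ℝ) (hlam : 0 < lam) (hρ : 0 < ρ) (n : ℕ)
    (L : H →L[ℝ] ℝ) (hL : ‖L‖ ≤ κ)
    (hD : ∀ f g : H, |(Eu f - Ew f) - (Eu g - Ew g)| ≤ (2 * ρ / (n + 1)) * |L f - L g|)
    (fu fw : H)
    (hfu : ∀ f : H, Eu fu + lam * ‖fu‖ ^ 2 ≤ Eu f + lam * ‖f‖ ^ 2)
    (hfw : ∀ f : H, Ew fw + lam * ‖fw‖ ^ 2 ≤ Ew f + lam * ‖f‖ ^ 2) :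
    ‖fu - fw‖ ≤ κ * ρ / (lam * (n + 1)) := by
  have hκ : 0 ≤ κ := (norm_nonneg L).trans hL
  have hgap := (hEu.strongConvexOn_add_mul_sq_norm lam).mul_sq_norm_sub_le_of_isMinOn
    (hEw.strongConvexOn_add_mul_sq_norm lam) (Set.mem_univ fu) (Set.mem_univ fw)
    (fun f _ ↦ hfu f) (fun f _ ↦ hfw f)
  have hL_lip : |L fw - L fu| ≤ κ * ‖fu - fw‖ := by
    rw [← map_sub, ← Real.norm_eq_abs, norm_sub_rev fu fw]
    exact L.le_of_opNorm_le hL _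
  have hquad : 2 * lam * ‖fu - fw‖ ^ 2 ≤ (2 * ρ / (n + 1) * κ) * ‖fu - fw‖ :=
    calc 2 * lam * ‖fu - fw‖ ^ 2 ≤ (Eu fw - Ew fw) - (Eu fu - Ew fu) := by linarith
      _ ≤ (2 * ρ / (n + 1)) * |L fw - L fu| := (le_abs_self _).trans (hD fw fu)
      _ ≤ (2 * ρ / (n + 1)) * (κ * ‖fu - fw‖) := by gcongr
      _ = (2 * ρ / (n + 1) * κ) * ‖fu - fw‖ := by ring
  convert le_div_of_mul_sq_le_mul (by positivity) (by positivity) hquad using 1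
  field_simp

theorem stmt_8 {H : Type*} [NormedAddCommGroup H] [InnerProductSpace ℝ H]
    (Eu Ew : H → ℝ) (hEu : ConvexOn ℝ Set.univ Eu) (hEw : ConvexOn ℝ Set.univ Ew)
    (lam κ ρ : ℝ) (hlam : 0 < lam) (hκ : 0 < κ) (hρ : 0 < ρ) (n : ℕ)
    (L : H →L[ℝ] ℝ) (hL : ‖L‖ ≤ κ)
    (hD : ∀ f g : H, |(Eu f - Ew f) - (Eu g - Ew g)| ≤ (2 * ρ / (n + 1)) * |L f - L g|)
    (fu fw : H)
    (hfu : ∀ f : H, Eu fu + lam * ‖fu‖ ^ 2 ≤ Eu f + lam * ‖f‖ ^ 2)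
    (hfw : ∀ f : H, Ew fw + lam * ‖fw‖ ^ 2 ≤ Ew f + lam * ‖f‖ ^ 2) :
    ‖fu - fw‖ ≤ κ * ρ / (lam * (n + 1)) :=
  stmt_8_general Eu Ew hEu hEw lam κ ρ hlam hρ n L hL hD fu fw hfu hfw
end

section
/- Let a > 0 and ℓ(y,u) = a²(√(1 + ((y-u)/a)²) - 1) be the pseudo-Huber loss. Then the third derivative with respect to u satisfies |∂₂³ℓ(y,u)| ≤ (1/a)·(3/2)·(4/5)^{5/2} for all y, u, with equality attained at u = y ± a/2. -/
/-!
Substituting `s = (y - u) / a` turns the third derivative into `(3 / a) · s / (s² + 1)^{5/2}`,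
so everything reduces to maximising `|s| / (s² + 1)^{5/2}`. After squaring this is the polynomial
inequality `3125 s² ≤ 256 (s² + 1)^5`, whose difference is `(4s² - 1)²` times a polynomial with
positive coefficients; hence the maximum `(1/2)(4/5)^{5/2}` is attained exactly at `s = ±1/2`.
-/

lemma mul_le_add_one_pow_five {x : ℝ} (hx : 0 ≤ x) : 3125 * x ≤ 256 * (x + 1) ^ 5 := by
  have h : 256 * (x + 1) ^ 5 - 3125 * x
      = (4 * x - 1) ^ 2 * (16 * x ^ 3 + 88 * x ^ 2 + 203 * x + 256) := by ring
  nlinarith [show 0 ≤ (4 * x - 1) ^ 2 * (16 * x ^ 3 + 88 * x ^ 2 + 203 * x + 256) by positivity]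

lemma abs_div_sq_add_one_rpow_le (s : ℝ) :
    |s| / (s ^ 2 + 1) ^ ((5 : ℝ) / 2) ≤ 1 / 2 * ((4 : ℝ) / 5) ^ ((5 : ℝ) / 2) := by
  rw [div_le_iff₀ (by positivity), mul_assoc, ← Real.mul_rpow (by norm_num) (by positivity)]
  have hsq : ((4 / 5 * (s ^ 2 + 1)) ^ ((5 : ℝ) / 2)) ^ 2 = (4 / 5 * (s ^ 2 + 1)) ^ 5 := by
    rw [← Real.rpow_natCast, ← Real.rpow_mul (by positivity)]
    norm_num
  suffices |2 * s| ≤ (4 / 5 * (s ^ 2 + 1)) ^ ((5 : ℝ) / 2) by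
    rw [abs_mul, abs_two] at this
    linarith
  refine abs_le_of_sq_le_sq ?_ (by positivity)
  rw [hsq]
  nlinarith [mul_le_add_one_pow_five (sq_nonneg s)]

lemma abs_div_sq_add_one_rpow_of_abs_eq_half {s : ℝ} (hs : |s| = 1 / 2) :
    |s| / (s ^ 2 + 1) ^ ((5 : ℝ) / 2) = 1 / 2 * ((4 : ℝ) / 5) ^ ((5 : ℝ) / 2) := by
  rw [← sq_abs, hs, show ((1 : ℝ) / 2) ^ 2 + 1 = (4 / 5)⁻¹ by norm_num,
    Real.inv_rpow (by norm_num), div_inv_eq_mul]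

lemma abs_three_mul_div_eq {a : ℝ} (ha : 0 < a) (t : ℝ) :
    |3 * t / (a ^ 2 * (t ^ 2 / a ^ 2 + 1) ^ ((5 : ℝ) / 2))|
      = 3 / a * (|t / a| / ((t / a) ^ 2 + 1) ^ ((5 : ℝ) / 2)) := by
  have hden : 0 < a ^ 2 * (t ^ 2 / a ^ 2 + 1) ^ ((5 : ℝ) / 2) := by positivity
  rw [div_pow, abs_div, abs_div, abs_mul, abs_of_pos three_pos, abs_of_pos ha, abs_of_pos hden]
  field_simp

theorem stmt_14 (a : ℝ) (ha : 0 < a) :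
    (∀ y u : ℝ,
      |3 * (y - u) / (a ^ 2 * ((y - u) ^ 2 / a ^ 2 + 1) ^ ((5 : ℝ) / 2))|
        ≤ (1 / a) * (3 / 2) * ((4 : ℝ) / 5) ^ ((5 : ℝ) / 2)) ∧
    (∀ y : ℝ,
      |3 * (y - (y - a / 2)) / (a ^ 2 * ((y - (y - a / 2)) ^ 2 / a ^ 2 + 1) ^ ((5 : ℝ) / 2))|
        = (1 / a) * (3 / 2) * ((4 : ℝ) / 5) ^ ((5 : ℝ) / 2) ∧
      |3 * (y - (y + a / 2)) / (a ^ 2 * ((y - (y + a / 2)) ^ 2 / a ^ 2 + 1) ^ ((5 : ℝ) / 2))|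
        = (1 / a) * (3 / 2) * ((4 : ℝ) / 5) ^ ((5 : ℝ) / 2)) := by
  have hmax : 3 / a * (1 / 2 * ((4 : ℝ) / 5) ^ ((5 : ℝ) / 2))
      = (1 / a) * (3 / 2) * ((4 : ℝ) / 5) ^ ((5 : ℝ) / 2) := by ring
  refine ⟨fun y u => ?_, fun y => ⟨?_, ?_⟩⟩
  · rw [abs_three_mul_div_eq ha, ← hmax]
    gcongr
    exact abs_div_sq_add_one_rpow_le _
  · rw [abs_three_mul_div_eq ha, ← hmax, abs_div_sq_add_one_rpow_of_abs_eq_half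
      (by rw [sub_sub_cancel, div_div_cancel_left' ha.ne', abs_inv, abs_two, one_div])]
  · rw [abs_three_mul_div_eq ha, ← hmax, abs_div_sq_add_one_rpow_of_abs_eq_half
      (by rw [sub_add_cancel_left, neg_div, div_div_cancel_left' ha.ne', abs_neg, abs_inv,
        abs_two, one_div])]
end

section
/- Let a > 0 and t ∈ (0,1), and ℓ(y,u) = t(y-u) + a·log(1 + e^{-(y-u)/a}). Then the third derivative with respect to u satisfies |∂₂³ℓ(y,u)| ≤ (1/a²)·(5 + 3√3)/(√3 + 3)³ for all y, u, with the bound attained at u = y - a·ln(√3 + 2) and u = y - a·ln(2 - √3). -/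
/-!
With `x = exp ((y - u) / a) > 0` the third derivative is `(x - 1) x / (x + 1)³ / a²`, so everything
reduces to bounding `g x = (x - 1) x / (x + 1)³` on `x ≥ 0`. With `C = (5 + 3√3) / (√3 + 3)³`,
the cubics `C (x + 1)³ ± (x - 1) x` are positive multiples of `(x - (2 ∓ √3))² (x + 7 ± 4√3)`,
nonnegative for `x ≥ 0` since `4√3 < 7`; their double roots `2 ± √3` are where `g = ± C`.
-/

open Real

lemma four_mul_sqrt_three_lt_seven : 4 * √3 < 7 := by
  nlinarith [sq_sqrt (show (0 : ℝ) ≤ 3 by norm_num), sqrt_nonneg 3]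

lemma cube_add_eq_factor (x : ℝ) :
    (5 + 3 * √3) * (x + 1) ^ 3 + (x - 1) * x * (√3 + 3) ^ 3
      = (5 + 3 * √3) * (x - (2 - √3)) ^ 2 * (x + 7 + 4 * √3) := by
  linear_combination (-12 * √3 ^ 2 + x ^ 2 * √3 - 28 * x * √3 + 7 * √3 - 9 * x ^ 2 - 36 * x + 45)
    * sq_sqrt (show (0 : ℝ) ≤ 3 by norm_num)

lemma cube_sub_eq_factor (x : ℝ) :
    (5 + 3 * √3) * (x + 1) ^ 3 - (x - 1) * x * (√3 + 3) ^ 3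
      = (5 + 3 * √3) * (x - (2 + √3)) ^ 2 * (x + 7 - 4 * √3) := by
  linear_combination (12 * √3 ^ 2 - x ^ 2 * √3 - 26 * x * √3 + 47 * √3 + 9 * x ^ 2 - 54 * x + 45)
    * sq_sqrt (show (0 : ℝ) ≤ 3 by norm_num)

lemma abs_mul_div_cube_le {x : ℝ} (hx : 0 ≤ x) :
    |(x - 1) * x / (x + 1) ^ 3| ≤ (5 + 3 * √3) / (√3 + 3) ^ 3 := by
  have hx1 : 0 < (x + 1) ^ 3 := by positivity
  have hs3 : 0 < (√3 + 3) ^ 3 := by positivity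
  have hlower : 0 ≤ (5 + 3 * √3) * (x + 1) ^ 3 + (x - 1) * x * (√3 + 3) ^ 3 := by
    rw [cube_add_eq_factor]
    have : 0 ≤ x + 7 + 4 * √3 := by positivity
    positivity
  have hupper : 0 ≤ (5 + 3 * √3) * (x + 1) ^ 3 - (x - 1) * x * (√3 + 3) ^ 3 := by
    rw [cube_sub_eq_factor]
    have : 0 ≤ x + 7 - 4 * √3 := by linarith [four_mul_sqrt_three_lt_seven]
    positivity
  rw [abs_le]
  constructor
  · rw [le_div_iff₀ hx1, neg_mul, neg_le, div_mul_eq_mul_div, le_div_iff₀ hs3]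
    linarith
  · rw [div_le_div_iff₀ hx1 hs3]
    linarith

lemma mul_div_cube_two_add_sqrt_three :
    (2 + √3 - 1) * (2 + √3) / (2 + √3 + 1) ^ 3 = (5 + 3 * √3) / (√3 + 3) ^ 3 := by
  have h := cube_sub_eq_factor (2 + √3)
  rw [sub_self, zero_pow two_ne_zero, mul_zero, zero_mul, sub_eq_zero] at h
  rw [div_eq_div_iff (by positivity) (by positivity)]
  linarith

lemma mul_div_cube_two_sub_sqrt_three :
    (2 - √3 - 1) * (2 - √3) / (2 - √3 + 1) ^ 3 = -((5 + 3 * √3) / (√3 + 3) ^ 3) := by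
  have h := cube_add_eq_factor (2 - √3)
  rw [sub_self, zero_pow two_ne_zero, mul_zero, zero_mul] at h
  rw [← neg_div, div_eq_div_iff (by nlinarith [four_mul_sqrt_three_lt_seven]) (by positivity)]
  linarith

theorem stmt_17_general (a : ℝ) (ha : 0 < a) :
    (∀ y u : ℝ,
      |(Real.exp ((y - u) / a) - 1) * Real.exp ((y - u) / a) /
          (a ^ 2 * (Real.exp ((y - u) / a) + 1) ^ 3)|
        ≤ (1 / a ^ 2) * (5 + 3 * Real.sqrt 3) / (Real.sqrt 3 + 3) ^ 3) ∧
    (∀ y : ℝ,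
      |(Real.exp ((y - (y - a * Real.log (Real.sqrt 3 + 2))) / a) - 1) *
          Real.exp ((y - (y - a * Real.log (Real.sqrt 3 + 2))) / a) /
          (a ^ 2 * (Real.exp ((y - (y - a * Real.log (Real.sqrt 3 + 2))) / a) + 1) ^ 3)|
        = (1 / a ^ 2) * (5 + 3 * Real.sqrt 3) / (Real.sqrt 3 + 3) ^ 3 ∧
      |(Real.exp ((y - (y - a * Real.log (2 - Real.sqrt 3))) / a) - 1) *
          Real.exp ((y - (y - a * Real.log (2 - Real.sqrt 3))) / a) /
          (a ^ 2 * (Real.exp ((y - (y - a * Real.log (2 - Real.sqrt 3))) / a) + 1) ^ 3)|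
        = (1 / a ^ 2) * (5 + 3 * Real.sqrt 3) / (Real.sqrt 3 + 3) ^ 3) := by
  have hinv : 0 < 1 / a ^ 2 := by positivity
  have hC : 0 < (5 + 3 * √3) / (√3 + 3) ^ 3 := by positivity
  have hscale (x : ℝ) :
      |(x - 1) * x / (a ^ 2 * (x + 1) ^ 3)| = 1 / a ^ 2 * |(x - 1) * x / (x + 1) ^ 3| := by
    rw [← abs_of_pos hinv, ← abs_mul, div_mul_div_comm, one_mul]
  have hexp {c : ℝ} (hc : 0 < c) (y : ℝ) : exp ((y - (y - a * log c)) / a) = c := by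
    rw [sub_sub_cancel, mul_div_cancel_left₀ _ ha.ne', exp_log hc]
  simp only [hscale, mul_div_assoc (1 / a ^ 2)]
  refine ⟨fun y u ↦ ?_, fun y ↦ ⟨?_, ?_⟩⟩
  · exact mul_le_mul_of_nonneg_left (abs_mul_div_cube_le (exp_pos _).le) hinv.le
  · rw [hexp (by positivity), add_comm √3, mul_div_cube_two_add_sqrt_three, abs_of_pos hC]
  · rw [hexp (by linarith [four_mul_sqrt_three_lt_seven]), mul_div_cube_two_sub_sqrt_three,
      abs_neg, abs_of_pos hC]

theorem stmt_17 (a t : ℝ) (ha : 0 < a) (ht0 : 0 < t) (ht1 : t < 1) :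
    (∀ y u : ℝ,
      |(Real.exp ((y - u) / a) - 1) * Real.exp ((y - u) / a) /
          (a ^ 2 * (Real.exp ((y - u) / a) + 1) ^ 3)|
        ≤ (1 / a ^ 2) * (5 + 3 * Real.sqrt 3) / (Real.sqrt 3 + 3) ^ 3) ∧
    (∀ y : ℝ,
      |(Real.exp ((y - (y - a * Real.log (Real.sqrt 3 + 2))) / a) - 1) *
          Real.exp ((y - (y - a * Real.log (Real.sqrt 3 + 2))) / a) /
          (a ^ 2 * (Real.exp ((y - (y - a * Real.log (Real.sqrt 3 + 2))) / a) + 1) ^ 3)|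
        = (1 / a ^ 2) * (5 + 3 * Real.sqrt 3) / (Real.sqrt 3 + 3) ^ 3 ∧
      |(Real.exp ((y - (y - a * Real.log (2 - Real.sqrt 3))) / a) - 1) *
          Real.exp ((y - (y - a * Real.log (2 - Real.sqrt 3))) / a) /
          (a ^ 2 * (Real.exp ((y - (y - a * Real.log (2 - Real.sqrt 3))) / a) + 1) ^ 3)|
        = (1 / a ^ 2) * (5 + 3 * Real.sqrt 3) / (Real.sqrt 3 + 3) ^ 3) :=
  stmt_17_general a ha
end

section
/- Fix reals Ỹ₁,…,Ỹ_{n+1}, Y₁,…,Y_n, a threshold T ≥ 0, and level α ∈ (0,1). Let i_{n,α} = ⌈(n+1)(1-α)⌉ and let |Y_{(i)} - Ỹ_{(i)}| denote the i-th smallest of the values |Y_i - Ỹ_i|, i = 1,…,n. Then the set {y ∈ ℝ : (1 + Σᵢ 𝟙{|Y_i - Ỹ_i| ≥ |y - Ỹ_{n+1}| - 2T})/(n+1) > α} is contained in the interval {y : |y - Ỹ_{n+1}| ≤ |Y_{(i_{n,α})} - Ỹ_{(i_{n,α})}| + 2T} (when i_{n,α} ≤ n). -/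
/-!
If the test score `t` exceeded the `k`-th smallest calibration score, at most `n - (k + 1)`
calibration scores would be `≥ t`, so the conformal p-value `(1 + #{j | t ≤ s j}) / (n + 1)` would
be at most `(n - k) / (n + 1)`, which is `≤ α` as soon as `k + 1 ≥ (n + 1)(1 - α)`.
-/

open Finset

lemma Monotone.card_filter_le_le_of_lt {α : Type*} [LinearOrder α] {n : ℕ} {s : Fin n → α}
    (hs : Monotone s) {k : Fin n} {t : α} (hkt : s k < t) :
    #{j | t ≤ s j} ≤ n - (k + 1) := by
  calc #{j | t ≤ s j} ≤ #(Ioi k) := by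
        refine card_le_card fun j hj => mem_Ioi.mpr ?_
        by_contra! hjk
        exact (lt_of_le_of_lt (hs hjk) hkt).not_ge (mem_filter.mp hj).2
    _ = n - (k + 1) := by rw [Fin.card_Ioi]; omega

lemma Monotone.le_of_lt_conformal_pvalue {n : ℕ} {s : Fin n → ℝ} (hs : Monotone s)
    {α t : ℝ} {k : Fin n} (hk : (n + 1) * (1 - α) ≤ (k + 1 : ℕ))
    (hp : α < (1 + #{j | t ≤ s j}) / (n + 1)) : t ≤ s k := by
  by_contra! hkt
  have hcard : (#{j | t ≤ s j} : ℝ) + (k + 1 : ℕ) ≤ n := by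
    have := hs.card_filter_le_le_of_lt hkt
    exact_mod_cast (show #{j | t ≤ s j} + (k + 1) ≤ n by omega)
  rw [lt_div_iff₀ (by positivity)] at hp
  linarith

lemma sum_range_ite_eq_card_perm {n : ℕ} (g : ℕ → ℝ) (σ : Equiv.Perm (Fin n)) (t : ℝ) :
    ∑ j ∈ range n, (if g j ≥ t then (1 : ℝ) else 0) = #{k | t ≤ g (σ k)} := by
  rw [← Fin.sum_univ_eq_sum_range (fun j => if g j ≥ t then (1 : ℝ) else 0),
    ← Equiv.sum_comp σ, sum_boole]

theorem stmt_18 (n : ℕ) (hn : 1 ≤ n) (Y Yt : ℕ → ℝ) (T α : ℝ)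
    (i : ℕ) (hi : i = Nat.ceil ((n + 1 : ℝ) * (1 - α))) (hin : i ≤ n)
    (σ : Equiv.Perm (Fin n))
    (hσ : Monotone (fun k : Fin n => |Y (σ k) - Yt (σ k)|)) :
    {y : ℝ |
        α < (1 + ∑ j ∈ Finset.range n,
          (if |Y j - Yt j| ≥ |y - Yt n| - 2 * T then (1 : ℝ) else 0)) / (n + 1)}
      ⊆ {y : ℝ |
          |y - Yt n| ≤
            |Y (σ ⟨i - 1, by omega⟩) - Yt (σ ⟨i - 1, by omega⟩)| + 2 * T} := by
  intro y hy
  rw [Set.mem_ofPred_eq, sum_range_ite_eq_card_perm (fun j => |Y j - Yt j|) σ] at hy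
  have hk : (n + 1 : ℝ) * (1 - α) ≤ (i - 1 + 1 : ℕ) :=
    (hi ▸ Nat.le_ceil _).trans (Nat.cast_le.mpr (by omega))
  have := hσ.le_of_lt_conformal_pvalue (k := ⟨i - 1, by omega⟩) hk hy
  exact sub_le_iff_le_add.mp this
end
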